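/- arXiv:1303.4532 — 3 statements merged into one kernel-verified Lean document; each statement's English description precedes it below -/
import Mathlib

section
/- (Invertibility) Assume condition (Cond1) holds and the initial distribution π respects {α_i}. Let π̃(A_i) = π(A_i). Then for all n ≥ 0, all i, and all s ∈ A_i, (π P^n)(s) = (π̃ P̃^n)(A_i) · α_i(s); i.e. the distribution of the original chain at any time can be recovered from the distribution of the aggregated chain via the measures α_i. -/
/-!
If `v` restricted to each block `A_i` is `w_i • α_i`, then splitting
`(v P)(s) = ∑ s', v(s') P(s', s)` along the blocks and applying (Cond1) gives
`(v P)(s) = (w P̃)(j) · α_j(s)` for `s ∈ A_j`: one step of either chain preserves this relation.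
It holds for `(π, π̃)` because `π` respects `{α_i}`, hence by induction for `(π Pⁿ, π̃ P̃ⁿ)`.
-/

open Finset Matrix Filter

theorem Finset.sum_eq_sum_sum_of_existsUnique_mem {ι S M : Type*} [Fintype ι] [Fintype S]
    [AddCommMonoid M] (A : ι → Finset S) (hpart : ∀ s, ∃! i, s ∈ A i) (f : S → M) :
    ∑ s, f s = ∑ i, ∑ s ∈ A i, f s := by
  classical
  choose block hmem hunique using hpart
  rw [Finset.sum_comm' (t' := univ) (s' := fun s => {block s})]
  · simp
  · intro i s
    simpa [eq_comm] using ⟨hunique s i, fun h => h ▸ hmem s⟩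

section Lumping

variable {ι S R : Type*} [Fintype ι] [Fintype S] [CommSemiring R]
  (A : ι → Finset S) (α : ι → S → R)

def RespectsBlocks (v : S → R) (w : ι → R) : Prop :=
  ∀ i, ∀ s ∈ A i, v s = w i * α i s

/-- (Cond1) together with `P̃ i j = δ(A_i, s)`, with the division by `α j s` cleared. -/
def IsAggregation (P : Matrix S S R) (Pt : Matrix ι ι R) : Prop :=
  ∀ i j, ∀ s ∈ A j, ∑ s' ∈ A i, α i s' * P s' s = Pt i j * α j s

variable {A α}

theorem RespectsBlocks.vecMul {v : S → R} {w : ι → R} (hv : RespectsBlocks A α v w)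
    (hpart : ∀ s, ∃! i, s ∈ A i) {P : Matrix S S R} {Pt : Matrix ι ι R}
    (hlump : IsAggregation A α P Pt) :
    RespectsBlocks A α (v ᵥ* P) (w ᵥ* Pt) := by
  intro j s hs
  calc (v ᵥ* P) s = ∑ i, ∑ s' ∈ A i, v s' * P s' s :=
        Finset.sum_eq_sum_sum_of_existsUnique_mem A hpart _
    _ = ∑ i, w i * (Pt i j * α j s) := by
        refine Finset.sum_congr rfl fun i _ => ?_
        rw [← hlump i j s hs, Finset.mul_sum]
        refine Finset.sum_congr rfl fun s' hs' => ?_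
        rw [hv i s' hs', mul_assoc]
    _ = (w ᵥ* Pt) j * α j s := by
        simp only [Matrix.vecMul, dotProduct, Finset.sum_mul, mul_assoc]

theorem RespectsBlocks.vecMul_pow [DecidableEq S] [DecidableEq ι] {v : S → R} {w : ι → R}
    (hv : RespectsBlocks A α v w) (hpart : ∀ s, ∃! i, s ∈ A i) {P : Matrix S S R}
    {Pt : Matrix ι ι R}
    (hlump : IsAggregation A α P Pt) (n : ℕ) :
    RespectsBlocks A α (v ᵥ* (P ^ n)) (w ᵥ* (Pt ^ n)) := by
  induction n with
  | zero => simpa using hv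
  | succ n ih =>
    simpa only [pow_succ, ← Matrix.vecMul_vecMul] using ih.vecMul hpart hlump

end Lumping

theorem stmt_4_general {S : Type*} [Fintype S] [DecidableEq S]
    {m : ℕ} (A : Fin m → Finset S)
    (hpart : ∀ s : S, ∃! i : Fin m, s ∈ A i)
    (P : Matrix S S ℝ)
    (α : Fin m → S → ℝ)
    (hαpos : ∀ i, ∀ s ∈ A i, 0 < α i s)
    (Pt : Matrix (Fin m) (Fin m) ℝ)
    (hPt : ∀ i j : Fin m, ∀ s ∈ A j,
      Pt i j = (∑ s' ∈ A i, α i s' * P s' s) / α j s)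
    (π : S → ℝ)
    (hresp : ∀ i : Fin m, ∀ s ∈ A i, π s = α i s * ∑ s' ∈ A i, π s') :
    ∀ (n : ℕ) (i : Fin m), ∀ s ∈ A i,
      Matrix.vecMul π (P ^ n) s
        = Matrix.vecMul (fun i' => ∑ s' ∈ A i', π s') (Pt ^ n) i * α i s := by
  have hlump : IsAggregation A α P Pt := by
    intro i j s hs
    rw [hPt i j s hs, div_mul_cancel₀ _ (hαpos j s hs).ne']
  have hπ : RespectsBlocks A α π fun i => ∑ s' ∈ A i, π s' := fun i s hs => by
    rw [hresp i s hs, mul_comm]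
  exact hπ.vecMul_pow hpart hlump

theorem stmt_4 {S : Type*} [Fintype S] [DecidableEq S] [Nonempty S]
    {m : ℕ} (A : Fin m → Finset S)
    (hpart : ∀ s : S, ∃! i : Fin m, s ∈ A i)
    (hne : ∀ i, (A i).Nonempty)
    (P : Matrix S S ℝ)
    (hP0 : ∀ s s' : S, 0 ≤ P s s')
    (hP1 : ∀ s : S, ∑ s' : S, P s s' = 1)
    (α : Fin m → S → ℝ)
    (hα0 : ∀ i, ∀ s : S, s ∉ A i → α i s = 0)
    (hαpos : ∀ i, ∀ s ∈ A i, 0 < α i s)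
    (hα1 : ∀ i, ∑ s ∈ A i, α i s = 1)
    (Pt : Matrix (Fin m) (Fin m) ℝ)
    (hPt : ∀ i j : Fin m, ∀ s ∈ A j,
      Pt i j = (∑ s' ∈ A i, α i s' * P s' s) / α j s)
    (π : S → ℝ) (hπ0 : ∀ s : S, 0 ≤ π s) (hπ1 : ∑ s : S, π s = 1)
    (hresp : ∀ i : Fin m, ∀ s ∈ A i, π s = α i s * ∑ s' ∈ A i, π s') :
    ∀ (n : ℕ) (i : Fin m), ∀ s ∈ A i,
      Matrix.vecMul π (P ^ n) s
        = Matrix.vecMul (fun i' => ∑ s' ∈ A i', π s') (Pt ^ n) i * α i s :=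
  stmt_4_general A hpart P α hαpos Pt hPt π hresp
end

section
/- Assume condition (Cond1) holds. If P is irreducible (for all s, s' ∈ S there exists n ≥ 0 with P^n(s, s') > 0), then P̃ is irreducible (for all i, j there exists n ≥ 0 with P̃^n(A_i, A_j) > 0). -/
/-!
Viewing `α` as the `m × S` matrix of the block distributions, condition (Cond1) says exactly
`α * P = P̃ * α`. Hence `α * P ^ n = P̃ ^ n * α`, and evaluating at `(A_i, s)` with `s ∈ A_j` gives
`∑_{s' ∈ A_i} α_i(s') P^n(s', s) = P̃^n(A_i, A_j) α_j(s)`. Irreducibility of `P` makes the left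
side positive for a suitable `n`, and `α_j(s) > 0`.
-/

open Finset Matrix

theorem Matrix.mul_pow_eq_pow_mul_of_mul_eq {ι κ R : Type*} [Fintype ι] [DecidableEq ι]
    [Fintype κ] [DecidableEq κ] [Semiring R] {U : Matrix κ ι R} {P : Matrix ι ι R}
    {Q : Matrix κ κ R} (h : U * P = Q * U) (n : ℕ) : U * P ^ n = Q ^ n * U := by
  induction n with
  | zero => simp
  | succ n ih =>
    rw [pow_succ, ← Matrix.mul_assoc, ih, Matrix.mul_assoc, h, pow_succ, Matrix.mul_assoc]

section Lumping

variable {ι S : Type*} {A : ι → Finset S}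

theorem of_mul_apply_eq_sum_block {R : Type*} [Fintype S] [Semiring R] {α : ι → S → R}
    (hα0 : ∀ i, ∀ s, s ∉ A i → α i s = 0) (Q : Matrix S S R) (i : ι) (s : S) :
    (Matrix.of α * Q) i s = ∑ s' ∈ A i, α i s' * Q s' s := by
  rw [mul_apply]
  exact (sum_subset (subset_univ _) fun s' _ hs' => by simp [hα0 i s' hs']).symm

theorem mul_of_apply_of_mem_block {R : Type*} [Fintype ι] [Semiring R] {α : ι → S → R}
    (hpart : ∀ s : S, ∃! i : ι, s ∈ A i)
    (hα0 : ∀ i, ∀ s, s ∉ A i → α i s = 0) {κ : Type*} (M : Matrix κ ι R) (k : κ)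
    {j : ι} {s : S} (hs : s ∈ A j) : (M * Matrix.of α) k s = M k j * α j s := by
  rw [mul_apply, sum_eq_single j (fun i _ hij => ?_) (by simp)]
  · rfl
  · simp [hα0 i s fun hsi => hij ((hpart s).unique hsi hs)]

theorem of_mul_eq_mul_of_of_lumpable {K : Type*} [Fintype ι] [Fintype S] [Field K]
    {α : ι → S → K} (hpart : ∀ s : S, ∃! i : ι, s ∈ A i)
    (hα0 : ∀ i, ∀ s, s ∉ A i → α i s = 0) (hα : ∀ i, ∀ s ∈ A i, α i s ≠ 0)
    {P : Matrix S S K} {Pt : Matrix ι ι K}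
    (hPt : ∀ i j, ∀ s ∈ A j, Pt i j = (∑ s' ∈ A i, α i s' * P s' s) / α j s) :
    Matrix.of α * P = Pt * Matrix.of α := by
  ext i s
  obtain ⟨j, hs, -⟩ := hpart s
  rw [of_mul_apply_eq_sum_block hα0, mul_of_apply_of_mem_block hpart hα0 _ _ hs,
    hPt i j s hs, div_mul_cancel₀ _ (hα j s hs)]

end Lumping

theorem stmt_7_general {S : Type*} [Fintype S] [DecidableEq S]
    {m : ℕ} (A : Fin m → Finset S)
    (hpart : ∀ s : S, ∃! i : Fin m, s ∈ A i)
    (hne : ∀ i, (A i).Nonempty)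
    (P : Matrix S S ℝ)
    (hP0 : ∀ s s' : S, 0 ≤ P s s')
    (α : Fin m → S → ℝ)
    (hα0 : ∀ i, ∀ s : S, s ∉ A i → α i s = 0)
    (hαpos : ∀ i, ∀ s ∈ A i, 0 < α i s)
    (Pt : Matrix (Fin m) (Fin m) ℝ)
    (hPt : ∀ i j : Fin m, ∀ s ∈ A j,
      Pt i j = (∑ s' ∈ A i, α i s' * P s' s) / α j s)
    (hirr : ∀ s s' : S, ∃ n : ℕ, 0 < (P ^ n) s s') :
    ∀ i j : Fin m, ∃ n : ℕ, 0 < (Pt ^ n) i j := by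
  intro i j
  obtain ⟨si, hsi⟩ := hne i
  obtain ⟨sj, hsj⟩ := hne j
  obtain ⟨n, hn⟩ := hirr si sj
  refine ⟨n, ?_⟩
  have hintertwine := congrFun (congrFun (mul_pow_eq_pow_mul_of_mul_eq
    (of_mul_eq_mul_of_of_lumpable hpart hα0 (fun i s hs => (hαpos i s hs).ne') hPt) n) i) sj
  rw [of_mul_apply_eq_sum_block hα0, mul_of_apply_of_mem_block hpart hα0 _ _ hsj] at hintertwine
  have hsum_pos : 0 < ∑ s' ∈ A i, α i s' * (P ^ n) s' sj :=
    sum_pos' (fun s' hs' => mul_nonneg (hαpos i s' hs').le (pow_apply_nonneg hP0 n s' sj))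
      ⟨si, hsi, mul_pos (hαpos i si hsi) hn⟩
  exact pos_of_mul_pos_left (hintertwine ▸ hsum_pos) (hαpos j sj hsj).le

theorem stmt_7 {S : Type*} [Fintype S] [DecidableEq S] [Nonempty S]
    {m : ℕ} (A : Fin m → Finset S)
    (hpart : ∀ s : S, ∃! i : Fin m, s ∈ A i)
    (hne : ∀ i, (A i).Nonempty)
    (P : Matrix S S ℝ)
    (hP0 : ∀ s s' : S, 0 ≤ P s s')
    (hP1 : ∀ s : S, ∑ s' : S, P s s' = 1)
    (α : Fin m → S → ℝ)
    (hα0 : ∀ i, ∀ s : S, s ∉ A i → α i s = 0)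
    (hαpos : ∀ i, ∀ s ∈ A i, 0 < α i s)
    (hα1 : ∀ i, ∑ s ∈ A i, α i s = 1)
    (Pt : Matrix (Fin m) (Fin m) ℝ)
    (hPt : ∀ i j : Fin m, ∀ s ∈ A j,
      Pt i j = (∑ s' ∈ A i, α i s' * P s' s) / α j s)
    (hirr : ∀ s s' : S, ∃ n : ℕ, 0 < (P ^ n) s s') :
    ∀ i j : Fin m, ∃ n : ℕ, 0 < (Pt ^ n) i j :=
  stmt_7_general A hpart hne P hP0 α hα0 hαpos Pt hPt hirr
end

section
/- (Continuous-time convergence) Assume condition (Cond2) holds, Q is irreducible (for all s, s' ∈ S there exists t > 0 with (exp(tQ))(s, s') > 0), and μ is a stationary distribution of Q (μQ = 0). Let μ̃(A_i) = μ(A_i). Then μ̃ Q̃ = 0, i.e. μ̃ is stationary for Q̃. Moreover, for any initial probability distribution π on S with π̃(A_i) = π(A_i), as t → ∞: (i) (π̃ · exp(tQ̃))(A_i) − (π · exp(tQ))(A_i) → 0 for every i; and (ii) (π · exp(tQ))(s) / (π̃ · exp(tQ̃))(A_i) → α_i(s) for every i and s ∈ A_i. -/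
/-!
Let `V` be the matrix whose rows are the `α_i` and `U` the indicator matrix of the blocks, so
that `π ᵥ* U = π̃` and `V * U = 1`. Condition (Cond2) says exactly `Q̃ * V = V * Q`, hence
`exp (t Q̃) = V * exp (t Q) * U`: the lumped chain started at `ρ̃` is the aggregate of the
original chain started at `ρ̃ V`.

Irreducibility makes `exp (T Q)` entrywise positive for some `T > 0`, so Doeblin's contraction
of the `ℓ¹` distance gives `ρ exp (t Q) → μ` for every initial distribution `ρ`. Therefore the
lumped chain converges to `μ U = μ̃` from any start, and comparing the two limits of
`(μ̃ V) exp (t Q) = (μ̃ exp (t Q̃)) V` yields `μ = μ̃ V`, i.e. `μ s = μ̃ (A_i) α_i s` on `A_i`.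
Stationarity of `μ̃` and both limits follow from this identity.
-/

open Finset Matrix Filter NormedSpace
open scoped Nat Topology

namespace Matrix

section Exponential

variable {n n' : Type*} [Fintype n] [DecidableEq n] [Fintype n'] [DecidableEq n']

theorem hasSum_exp (X : Matrix n n ℝ) :
    HasSum (fun k : ℕ => (k !⁻¹ : ℝ) • X ^ k) (exp X) := by
  -- `exp` is defined topologically; any submultiplicative norm serves to sum its series
  let _ : NormedRing (Matrix n n ℝ) := Matrix.linftyOpNormedRing
  let _ : NormedAlgebra ℝ (Matrix n n ℝ) := Matrix.linftyOpNormedAlgebra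
  exact exp_series_hasSum_exp' X

theorem hasSum_exp_apply (X : Matrix n n ℝ) (i j : n) :
    HasSum (fun k : ℕ => (k !⁻¹ : ℝ) * (X ^ k) i j) (exp X i j) :=
  Pi.hasSum.1 (Pi.hasSum.1 (hasSum_exp X) i) j

theorem exp_mul_eq_mul_exp_of_mul_eq {X : Matrix n n ℝ} {Y : Matrix n' n' ℝ}
    {V : Matrix n n' ℝ} (h : X * V = V * Y) : exp X * V = V * exp Y := by
  have hpow (k : ℕ) : X ^ k * V = V * Y ^ k := by
    induction k with
    | zero => simp
    | succ k ih =>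
      rw [pow_succ, pow_succ, Matrix.mul_assoc, h, ← Matrix.mul_assoc, ih, Matrix.mul_assoc]
  have hX : HasSum (fun k : ℕ => (k !⁻¹ : ℝ) • (X ^ k * V)) (exp X * V) := by
    simpa [Function.comp_def, Matrix.smul_mul] using
      (hasSum_exp X).map (addMonoidHomMulRight V) (continuous_id.matrix_mul continuous_const)
  have hY : HasSum (fun k : ℕ => (k !⁻¹ : ℝ) • (V * Y ^ k)) (V * exp Y) := by
    simpa [Function.comp_def, Matrix.mul_smul] using
      (hasSum_exp Y).map (addMonoidHomMulLeft V) (continuous_const.matrix_mul continuous_id)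
  simp only [hpow] at hX
  exact hX.unique hY

theorem exp_mulVec_of_mulVec_eq_zero {X : Matrix n n ℝ} {v : n → ℝ} (h : X *ᵥ v = 0) :
    exp X *ᵥ v = v := by
  have hcol : X * replicateCol Unit v = replicateCol Unit v * (0 : Matrix Unit Unit ℝ) := by
    rw [← replicateCol_mulVec, h, Matrix.mul_zero]
    rfl
  have := exp_mul_eq_mul_exp_of_mul_eq hcol
  rw [exp_zero, Matrix.mul_one, ← replicateCol_mulVec] at this
  exact funext fun i => congrFun (congrFun this i) ()

theorem vecMul_exp_of_vecMul_eq_zero {X : Matrix n n ℝ} {v : n → ℝ} (h : v ᵥ* X = 0) :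
    v ᵥ* exp X = v := by
  have hrow : (0 : Matrix Unit Unit ℝ) * replicateRow Unit v = replicateRow Unit v * X := by
    rw [← replicateRow_vecMul, h, Matrix.zero_mul]
    rfl
  have := exp_mul_eq_mul_exp_of_mul_eq hrow
  rw [exp_zero, Matrix.one_mul, ← replicateRow_vecMul] at this
  exact funext fun j => (congrFun (congrFun this ()) j).symm

theorem exp_apply_nonneg_of_nonneg {B : Matrix n n ℝ} (hB : ∀ i j, 0 ≤ B i j) (i j : n) :
    0 ≤ exp B i j :=
  (hasSum_exp_apply B i j).nonneg fun k => mul_nonneg (by positivity) (pow_apply_nonneg hB k i j)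

theorem one_le_exp_apply_self_of_nonneg {B : Matrix n n ℝ} (hB : ∀ i j, 0 ≤ B i j) (i : n) :
    1 ≤ exp B i i := by
  simpa using le_hasSum (hasSum_exp_apply B i i) 0 fun k _ =>
    mul_nonneg (by positivity) (pow_apply_nonneg hB k i i)

theorem exp_smul_one (r : ℝ) : exp (r • (1 : Matrix n n ℝ)) = Real.exp r • 1 := by
  rw [smul_one_eq_diagonal, exp_diagonal, smul_one_eq_diagonal, Pi.exp_def, Real.exp_eq_exp_ℝ]

theorem exp_eq_mul_exp_mul_of_mul_eq {X : Matrix n n ℝ} {Y : Matrix n' n' ℝ}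
    {V : Matrix n n' ℝ} {U : Matrix n' n ℝ} (hVU : V * U = 1) (h : X * V = V * Y) :
    exp X = V * exp Y * U := by
  rw [← exp_mul_eq_mul_exp_of_mul_eq h, Matrix.mul_assoc, hVU, Matrix.mul_one]

end Exponential

theorem sum_vecMul_of_mulVec_one {R m n : Type*} [Semiring R] [Fintype m] [Fintype n]
    {M : Matrix m n R} (hM : M *ᵥ 1 = 1) (v : m → R) : ∑ j, (v ᵥ* M) j = ∑ i, v i := by
  rw [← dotProduct_one, ← dotProduct_one, ← dotProduct_mulVec, hM]

section Generator

variable {S : Type*} [Fintype S] [DecidableEq S] {Q : Matrix S S ℝ}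

theorem exp_smul_eq_smul_exp_smul_add_smul_one (Q : Matrix S S ℝ) (t c : ℝ) :
    exp (t • Q) = Real.exp (-(t * c)) • exp (t • (Q + c • 1)) := by
  have hsplit : t • Q = (-(t * c)) • (1 : Matrix S S ℝ) + t • (Q + c • 1) := by
    rw [smul_add, smul_smul, neg_smul, neg_add_cancel_comm_assoc]
  rw [hsplit, exp_add_of_commute _ _ ((Commute.one_left _).smul_left _), exp_smul_one,
    Matrix.smul_mul, Matrix.one_mul]

theorem exists_add_smul_one_nonneg (hQ0 : ∀ s s', s ≠ s' → 0 ≤ Q s s') :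
    ∃ c : ℝ, ∀ s s', 0 ≤ (Q + c • 1) s s' := by
  refine ⟨∑ s, |Q s s|, fun s s' => ?_⟩
  rcases eq_or_ne s s' with rfl | h
  · have := single_le_sum (fun i _ => abs_nonneg (Q i i)) (mem_univ s)
    simp only [add_apply, smul_apply, one_apply_eq, smul_eq_mul, mul_one]
    linarith [neg_abs_le (Q s s)]
  · simpa [one_apply_ne h] using hQ0 s s' h

theorem exp_smul_apply_nonneg (hQ0 : ∀ s s', s ≠ s' → 0 ≤ Q s s') {t : ℝ} (ht : 0 ≤ t)
    (s s' : S) : 0 ≤ exp (t • Q) s s' := by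
  obtain ⟨c, hc⟩ := exists_add_smul_one_nonneg hQ0
  rw [exp_smul_eq_smul_exp_smul_add_smul_one Q t c, smul_apply, smul_eq_mul]
  exact mul_nonneg (Real.exp_pos _).le
    (exp_apply_nonneg_of_nonneg (fun i j => mul_nonneg ht (hc i j)) s s')

theorem exp_smul_apply_self_pos (hQ0 : ∀ s s', s ≠ s' → 0 ≤ Q s s') {t : ℝ} (ht : 0 ≤ t)
    (s : S) : 0 < exp (t • Q) s s := by
  obtain ⟨c, hc⟩ := exists_add_smul_one_nonneg hQ0
  rw [exp_smul_eq_smul_exp_smul_add_smul_one Q t c, smul_apply, smul_eq_mul]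
  exact mul_pos (Real.exp_pos _) <| one_pos.trans_le
    (one_le_exp_apply_self_of_nonneg (fun i j => mul_nonneg ht (hc i j)) s)

theorem exp_smul_mem_rowStochastic (hQ0 : ∀ s s', s ≠ s' → 0 ≤ Q s s') (hQ : Q *ᵥ 1 = 0)
    {t : ℝ} (ht : 0 ≤ t) : exp (t • Q) ∈ rowStochastic ℝ S :=
  ⟨exp_smul_apply_nonneg hQ0 ht,
    exp_mulVec_of_mulVec_eq_zero (by rw [smul_mulVec, hQ, smul_zero])⟩

theorem exp_add_smul (Q : Matrix S S ℝ) (a b : ℝ) :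
    exp ((a + b) • Q) = exp (a • Q) * exp (b • Q) := by
  rw [add_smul]
  exact exp_add_of_commute _ _ (((Commute.refl Q).smul_left a).smul_right b)

theorem exp_smul_apply_pos_of_le (hQ0 : ∀ s s', s ≠ s' → 0 ≤ Q s s') {t₀ t : ℝ}
    (h₀ : 0 ≤ t₀) (hle : t₀ ≤ t) {s s' : S} (hpos : 0 < exp (t₀ • Q) s s') :
    0 < exp (t • Q) s s' := by
  have hr : 0 ≤ t - t₀ := sub_nonneg.2 hle
  rw [show t = t₀ + (t - t₀) by ring, exp_add_smul, mul_apply]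
  calc 0 < exp (t₀ • Q) s s' * exp ((t - t₀) • Q) s' s' :=
        mul_pos hpos (exp_smul_apply_self_pos hQ0 hr s')
    _ ≤ ∑ u, exp (t₀ • Q) s u * exp ((t - t₀) • Q) u s' :=
        single_le_sum (fun u _ => mul_nonneg (exp_smul_apply_nonneg hQ0 h₀ s u)
          (exp_smul_apply_nonneg hQ0 hr u s')) (mem_univ s')

theorem exists_exp_smul_pos [Nonempty S] (hQ0 : ∀ s s', s ≠ s' → 0 ≤ Q s s')
    (hirr : ∀ s s', ∃ t : ℝ, 0 < t ∧ 0 < exp (t • Q) s s') :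
    ∃ T : ℝ, 0 < T ∧ ∀ s s', 0 < exp (T • Q) s s' := by
  choose τ hτ0 hτ using hirr
  obtain ⟨p, -, hp⟩ := exists_max_image univ (fun p : S × S => τ p.1 p.2) univ_nonempty
  obtain ⟨s₀⟩ := ‹Nonempty S›
  have hle (s s' : S) : τ s s' ≤ τ p.1 p.2 := hp (s, s') (mem_univ _)
  exact ⟨τ p.1 p.2, (hτ0 s₀ s₀).trans_le (hle s₀ s₀), fun s s' =>
    exp_smul_apply_pos_of_le hQ0 (hτ0 s s').le (hle s s') (hτ s s')⟩

end Generator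

theorem pos_of_vecMul_eq_self {n : Type*} [Fintype n] {P : Matrix n n ℝ}
    (hP : ∀ i j, 0 < P i j) {μ : n → ℝ} (hμ0 : ∀ i, 0 ≤ μ i)
    (hμ : μ ≠ 0) (hfix : μ ᵥ* P = μ) (j : n) : 0 < μ j := by
  obtain ⟨i, hi⟩ := Function.ne_iff.1 hμ
  rw [← hfix]
  calc 0 < μ i * P i j := mul_pos ((hμ0 i).lt_of_ne' hi) (hP i j)
    _ ≤ ∑ k, μ k * P k j :=
        single_le_sum (fun k _ => mul_nonneg (hμ0 k) (hP k j).le) (mem_univ i)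

section Doeblin

variable {n : Type*} [Fintype n] [DecidableEq n] {P : Matrix n n ℝ} {δ : ℝ}

theorem card_mul_le_one_of_le [Nonempty n] (hP : P ∈ rowStochastic ℝ n)
    (hδ : ∀ i j, δ ≤ P i j) : Fintype.card n * δ ≤ 1 := by
  obtain ⟨i⟩ := ‹Nonempty n›
  calc Fintype.card n * δ = ∑ _j : n, δ := by simp
    _ ≤ ∑ j, P i j := sum_le_sum fun j _ => hδ i j
    _ = 1 := sum_row_of_mem_rowStochastic hP i

theorem sum_abs_vecMul_le (hP : P ∈ rowStochastic ℝ n) (hδ : ∀ i j, δ ≤ P i j) {v : n → ℝ}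
    (hv : ∑ i, v i = 0) :
    ∑ j, |(v ᵥ* P) j| ≤ (1 - Fintype.card n * δ) * ∑ i, |v i| := by
  -- since `v` sums to zero, `δ` may be subtracted from every entry of `P`
  have hshift (j : n) : (v ᵥ* P) j = ∑ i, v i * (P i j - δ) := by
    simp only [vecMul, dotProduct, mul_sub, sum_sub_distrib, ← sum_mul, hv, zero_mul,
      sub_zero]
  calc ∑ j, |(v ᵥ* P) j| ≤ ∑ j, ∑ i, |v i| * (P i j - δ) := sum_le_sum fun j _ => by
        rw [hshift]
        refine (abs_sum_le_sum_abs _ _).trans_eq (sum_congr rfl fun i _ => ?_)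
        rw [abs_mul, abs_of_nonneg (sub_nonneg.2 (hδ i j))]
    _ = ∑ i, |v i| * (1 - Fintype.card n * δ) := by
        rw [sum_comm]
        simp [← mul_sum, sum_sub_distrib, sum_row_of_mem_rowStochastic hP]
    _ = (1 - Fintype.card n * δ) * ∑ i, |v i| := by rw [← sum_mul, mul_comm]

theorem sum_abs_vecMul_pow_le [Nonempty n] (hP : P ∈ rowStochastic ℝ n)
    (hδ : ∀ i j, δ ≤ P i j) {v : n → ℝ} (hv : ∑ i, v i = 0) (k : ℕ) :
    ∑ j, |(v ᵥ* P ^ k) j| ≤ (1 - Fintype.card n * δ) ^ k * ∑ i, |v i| := by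
  induction k with
  | zero => simp
  | succ k ih =>
    have hsum : ∑ i, (v ᵥ* P ^ k) i = 0 := by
      rw [sum_vecMul_of_mulVec_one (pow_mem hP k).2, hv]
    calc ∑ j, |(v ᵥ* P ^ (k + 1)) j|
        ≤ (1 - Fintype.card n * δ) * ∑ j, |(v ᵥ* P ^ k) j| := by
          rw [pow_succ, ← vecMul_vecMul]
          exact sum_abs_vecMul_le hP hδ hsum
      _ ≤ (1 - Fintype.card n * δ) * ((1 - Fintype.card n * δ) ^ k * ∑ i, |v i|) :=
          mul_le_mul_of_nonneg_left ih (sub_nonneg.2 (card_mul_le_one_of_le hP hδ))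
      _ = (1 - Fintype.card n * δ) ^ (k + 1) * ∑ i, |v i| := by ring

end Doeblin

section Ergodic

variable {S : Type*} [Fintype S] [DecidableEq S] [Nonempty S] {Q : Matrix S S ℝ}

theorem tendsto_sum_abs_vecMul_exp_smul (hQ0 : ∀ s s', s ≠ s' → 0 ≤ Q s s')
    (hQ : Q *ᵥ 1 = 0) (hirr : ∀ s s', ∃ t : ℝ, 0 < t ∧ 0 < exp (t • Q) s s')
    {v : S → ℝ} (hv : ∑ s, v s = 0) :
    Tendsto (fun t : ℝ => ∑ s, |(v ᵥ* exp (t • Q)) s|) atTop (𝓝 0) := by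
  obtain ⟨T, hT, hpos⟩ := exists_exp_smul_pos hQ0 hirr
  have hP := exp_smul_mem_rowStochastic hQ0 hQ hT.le
  obtain ⟨p, -, hp⟩ :=
    exists_min_image univ (fun p : S × S => exp (T • Q) p.1 p.2) univ_nonempty
  set δ := exp (T • Q) p.1 p.2
  have hδ (s s' : S) : δ ≤ exp (T • Q) s s' := hp (s, s') (mem_univ _)
  set θ := 1 - Fintype.card S * δ
  have hθ0 : 0 ≤ θ := sub_nonneg.2 (card_mul_le_one_of_le hP hδ)
  have hθ1 : θ < 1 := by
    have := mul_pos (Nat.cast_pos.2 (Fintype.card_pos (α := S))) (hpos p.1 p.2)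
    linarith
  have hbound (t : ℝ) (ht : 0 ≤ t) :
      ∑ s, |(v ᵥ* exp (t • Q)) s| ≤ θ ^ ⌊t / T⌋₊ * ∑ s, |v s| := by
    set k := ⌊t / T⌋₊
    have hr : 0 ≤ t - k * T :=
      sub_nonneg.2 ((le_div_iff₀ hT).1 (Nat.floor_le (div_nonneg ht hT.le)))
    have hsplit : exp (t • Q) = exp (T • Q) ^ k * exp ((t - k * T) • Q) := by
      rw [← exp_nsmul, ← Nat.cast_smul_eq_nsmul ℝ, smul_smul, ← exp_add_smul,
        add_sub_cancel]
    rw [hsplit, ← vecMul_vecMul]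
    calc _ ≤ (1 - Fintype.card S * 0) * ∑ s, |(v ᵥ* exp (T • Q) ^ k) s| :=
          sum_abs_vecMul_le (exp_smul_mem_rowStochastic hQ0 hQ hr)
            (exp_smul_apply_nonneg hQ0 hr)
            (by rw [sum_vecMul_of_mulVec_one (pow_mem hP k).2, hv])
      _ ≤ θ ^ k * ∑ s, |v s| := by simpa using sum_abs_vecMul_pow_le hP hδ hv k
  have hlim : Tendsto (fun t : ℝ => θ ^ ⌊t / T⌋₊ * ∑ s, |v s|) atTop (𝓝 0) := by
    simpa using ((tendsto_pow_atTop_nhds_zero_of_lt_one hθ0 hθ1).comp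
      (tendsto_nat_floor_atTop.comp (tendsto_id.atTop_div_const hT))).mul_const _
  exact squeeze_zero' (.of_forall fun t => sum_nonneg fun s _ => abs_nonneg _)
    ((eventually_ge_atTop 0).mono hbound) hlim

theorem tendsto_vecMul_exp_smul (hQ0 : ∀ s s', s ≠ s' → 0 ≤ Q s s')
    (hQ : Q *ᵥ 1 = 0) (hirr : ∀ s s', ∃ t : ℝ, 0 < t ∧ 0 < exp (t • Q) s s')
    {μ : S → ℝ} (hμ : μ ᵥ* Q = 0) {ρ : S → ℝ} (hρ : ∑ s, ρ s = ∑ s, μ s) :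
    Tendsto (fun t : ℝ => ρ ᵥ* exp (t • Q)) atTop (𝓝 μ) := by
  have hv : ∑ s, (ρ - μ) s = 0 := by simp [sum_sub_distrib, hρ]
  have hdecomp (t : ℝ) : ρ ᵥ* exp (t • Q) = μ + (ρ - μ) ᵥ* exp (t • Q) := by
    rw [sub_vecMul, vecMul_exp_of_vecMul_eq_zero (v := μ) (X := t • Q)
      (by rw [vecMul_smul, hμ, smul_zero]), add_sub_cancel]
  have hdecay : Tendsto (fun t : ℝ => (ρ - μ) ᵥ* exp (t • Q)) atTop (𝓝 0) :=
    tendsto_pi_nhds.2 fun s => squeeze_zero_norm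
      (fun t => single_le_sum (f := fun s => |((ρ - μ) ᵥ* exp (t • Q)) s|)
        (fun _ _ => abs_nonneg _) (mem_univ s))
      (tendsto_sum_abs_vecMul_exp_smul hQ0 hQ hirr hv)
  rw [← add_zero μ]
  exact (tendsto_const_nhds.add hdecay).congr fun t => (hdecomp t).symm

theorem pos_of_vecMul_eq_zero (hQ0 : ∀ s s', s ≠ s' → 0 ≤ Q s s')
    (hirr : ∀ s s', ∃ t : ℝ, 0 < t ∧ 0 < exp (t • Q) s s') {μ : S → ℝ} (hμ0 : ∀ s, 0 ≤ μ s)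
    (hμne : μ ≠ 0) (hμ : μ ᵥ* Q = 0) (s : S) : 0 < μ s := by
  obtain ⟨T, -, hT⟩ := exists_exp_smul_pos hQ0 hirr
  exact pos_of_vecMul_eq_self hT hμ0 hμne
    (vecMul_exp_of_vecMul_eq_zero (by rw [vecMul_smul, hμ, smul_zero])) s

end Ergodic

theorem vecMul_vecMul_eq_zero_of_mul_eq {ι S : Type*} [Fintype ι] [DecidableEq ι]
    [Fintype S]
    {Q : Matrix S S ℝ} {Qt : Matrix ι ι ℝ} {V : Matrix ι S ℝ} {U : Matrix S ι ℝ} {μ : S → ℝ}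
    (hVU : V * U = 1) (hQV : Qt * V = V * Q)
    (hμV : μ = (μ ᵥ* U) ᵥ* V) (hμ : μ ᵥ* Q = 0) : (μ ᵥ* U) ᵥ* Qt = 0 := by
  rw [← vecMul_one ((μ ᵥ* U) ᵥ* Qt), ← hVU, ← vecMul_vecMul, vecMul_vecMul _ Qt, hQV,
    ← vecMul_vecMul, ← hμV, hμ, zero_vecMul]

section Intertwining

variable {ι S : Type*} [Fintype ι] [DecidableEq ι] [Fintype S] [DecidableEq S]
  {Q : Matrix S S ℝ} {Qt : Matrix ι ι ℝ} {V : Matrix ι S ℝ} {U : Matrix S ι ℝ} {μ : S → ℝ}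

theorem tendsto_vecMul_exp_smul_of_mul_eq (hVU : V * U = 1) (hV : V *ᵥ 1 = 1)
    (hQV : Qt * V = V * Q)
    (herg : ∀ ρ : S → ℝ, ∑ s, ρ s = 1 →
      Tendsto (fun t : ℝ => ρ ᵥ* exp (t • Q)) atTop (𝓝 μ))
    {ρ : ι → ℝ} (hρ : ∑ i, ρ i = 1) :
    Tendsto (fun t : ℝ => ρ ᵥ* exp (t • Qt)) atTop (𝓝 (μ ᵥ* U)) := by
  have hsum : ∑ s, (ρ ᵥ* V) s = 1 := by rw [sum_vecMul_of_mulVec_one hV, hρ]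
  refine (((continuous_id.matrix_vecMul continuous_const).tendsto μ).comp
    (herg _ hsum)).congr fun t => ?_
  have hsmul : (t • Qt) * V = V * (t • Q) := by rw [Matrix.smul_mul, Matrix.mul_smul, hQV]
  simp only [Function.comp_apply, id, vecMul_vecMul]
  rw [exp_eq_mul_exp_mul_of_mul_eq hVU hsmul, Matrix.mul_assoc]

theorem eq_vecMul_vecMul_of_mul_eq (hVU : V * U = 1) (hV : V *ᵥ 1 = 1) (hU : U *ᵥ 1 = 1)
    (hQV : Qt * V = V * Q)
    (herg : ∀ ρ : S → ℝ, ∑ s, ρ s = 1 →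
      Tendsto (fun t : ℝ => ρ ᵥ* exp (t • Q)) atTop (𝓝 μ))
    (hμ : ∑ s, μ s = 1) :
    μ = (μ ᵥ* U) ᵥ* V := by
  have hsum : ∑ i, (μ ᵥ* U) i = 1 := by rw [sum_vecMul_of_mulVec_one hU, hμ]
  refine tendsto_nhds_unique (herg _ (by rw [sum_vecMul_of_mulVec_one hV, hsum])) ?_
  refine (((continuous_id.matrix_vecMul continuous_const).tendsto _).comp
    (tendsto_vecMul_exp_smul_of_mul_eq hVU hV hQV herg hsum)).congr fun t => ?_
  have hexp : exp (t • Qt) * V = V * exp (t • Q) :=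
    exp_mul_eq_mul_exp_of_mul_eq (by rw [Matrix.smul_mul, Matrix.mul_smul, hQV])
  simp only [Function.comp_apply, id, vecMul_vecMul]
  rw [Matrix.mul_assoc, hexp, Matrix.mul_assoc]

theorem tendsto_vecMul_exp_smul_sub_of_mul_eq (hVU : V * U = 1) (hV : V *ᵥ 1 = 1)
    (hU : U *ᵥ 1 = 1) (hQV : Qt * V = V * Q)
    (herg : ∀ ρ : S → ℝ, ∑ s, ρ s = 1 →
      Tendsto (fun t : ℝ => ρ ᵥ* exp (t • Q)) atTop (𝓝 μ))
    {π : S → ℝ} (hπ : ∑ s, π s = 1) :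
    Tendsto (fun t : ℝ => (π ᵥ* U) ᵥ* exp (t • Qt) - (π ᵥ* exp (t • Q)) ᵥ* U)
      atTop (𝓝 0) := by
  rw [← sub_self (μ ᵥ* U)]
  exact (tendsto_vecMul_exp_smul_of_mul_eq hVU hV hQV herg
    (by rw [sum_vecMul_of_mulVec_one hU, hπ])).sub
    (((continuous_id.matrix_vecMul continuous_const).tendsto μ).comp (herg π hπ))

end Intertwining

section Lumping

variable {ι S R : Type*} {A : ι → Finset S} {α : ι → S → R}

variable (R A) in
def blockIndicator [DecidableEq S] [Zero R] [One R] : Matrix S ι R :=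
  of fun s i => if s ∈ A i then 1 else 0

theorem vecMul_blockIndicator_apply [Fintype S] [DecidableEq S] [Semiring R] (π : S → R)
    (i : ι) : (π ᵥ* blockIndicator R A) i = ∑ s ∈ A i, π s := by
  simp [vecMul, dotProduct, blockIndicator, sum_ite_mem]

theorem blockIndicator_mulVec_one [Fintype ι] [DecidableEq S] [Semiring R]
    (hpart : ∀ s, ∃! i, s ∈ A i) : blockIndicator R A *ᵥ 1 = 1 := by
  ext s
  obtain ⟨i, hi, huniq⟩ := hpart s
  simp only [mulVec, dotProduct, blockIndicator, of_apply, Pi.one_apply, mul_one]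
  rw [sum_eq_single i (fun j _ hj => if_neg fun h => hj (huniq j h)) (by simp), if_pos hi]

theorem of_mulVec_one [Fintype S] [Semiring R] (hα0 : ∀ i, ∀ s, s ∉ A i → α i s = 0)
    (hα1 : ∀ i, ∑ s ∈ A i, α i s = 1) : of α *ᵥ 1 = 1 := by
  ext i
  simp only [mulVec, dotProduct, of_apply, Pi.one_apply, mul_one]
  rw [← hα1 i]
  exact (sum_subset (subset_univ _) fun s _ hs => hα0 i s hs).symm

theorem of_mul_blockIndicator [DecidableEq ι] [Fintype S] [DecidableEq S] [Semiring R]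
    (hpart : ∀ s, ∃! i, s ∈ A i) (hα0 : ∀ i, ∀ s, s ∉ A i → α i s = 0)
    (hα1 : ∀ i, ∑ s ∈ A i, α i s = 1) : of α * blockIndicator R A = 1 := by
  ext i j
  simp only [mul_apply, of_apply, blockIndicator, mul_ite, mul_one, mul_zero, sum_ite_mem,
    univ_inter]
  rcases eq_or_ne i j with rfl | hij
  · rw [hα1, one_apply_eq]
  · rw [one_apply_ne hij]
    exact sum_eq_zero fun s hs => hα0 i s fun hi => hij ((hpart s).unique hi hs)

theorem vecMul_of_apply_of_mem [Fintype ι] [Semiring R] (hpart : ∀ s, ∃! i, s ∈ A i)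
    (hα0 : ∀ i, ∀ s, s ∉ A i → α i s = 0) (x : ι → R) {i : ι} {s : S} (hs : s ∈ A i) :
    (x ᵥ* of α) s = x i * α i s := by
  simp only [vecMul, dotProduct, of_apply]
  refine sum_eq_single i (fun j _ hj => ?_) (by simp)
  rw [hα0 j s fun h => hj ((hpart s).unique h hs), mul_zero]

theorem mul_of_eq_of_mul [Fintype ι] [Fintype S] [Field R] (hpart : ∀ s, ∃! i, s ∈ A i)
    (hα0 : ∀ i, ∀ s, s ∉ A i → α i s = 0) (hαpos : ∀ i, ∀ s ∈ A i, α i s ≠ 0)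
    {Q : Matrix S S R} {Qt : Matrix ι ι R}
    (hQt : ∀ i j, ∀ s ∈ A j, Qt i j = (∑ s' ∈ A i, α i s' * Q s' s) / α j s) :
    Qt * of α = of α * Q := by
  ext i s
  obtain ⟨j, hj, -⟩ := hpart s
  have hlhs : (Qt * of α) i s = Qt i j * α j s :=
    vecMul_of_apply_of_mem hpart hα0 (Qt i) hj
  have hrhs : (of α * Q) i s = ∑ s' ∈ A i, α i s' * Q s' s := by
    rw [mul_apply]
    exact (sum_subset (subset_univ _) fun s' _ hs' => by
      rw [of_apply, hα0 i s' hs', zero_mul]).symm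
  rw [hlhs, hrhs, hQt i j s hj, div_mul_cancel₀ _ (hαpos j s hj)]

end Lumping

end Matrix

theorem stmt_17_general {S : Type*} [Fintype S] [DecidableEq S] [Nonempty S]
    {m : ℕ} (A : Fin m → Finset S)
    (hpart : ∀ s : S, ∃! i : Fin m, s ∈ A i)
    (Q : Matrix S S ℝ)
    (hQ0 : ∀ s s' : S, s ≠ s' → 0 ≤ Q s s')
    (hQrow : ∀ s : S, ∑ s' : S, Q s s' = 0)
    (α : Fin m → S → ℝ)
    (hα0 : ∀ i, ∀ s : S, s ∉ A i → α i s = 0)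
    (hαpos : ∀ i, ∀ s ∈ A i, 0 < α i s)
    (hα1 : ∀ i, ∑ s ∈ A i, α i s = 1)
    (Qt : Matrix (Fin m) (Fin m) ℝ)
    (hQt : ∀ i j : Fin m, ∀ s ∈ A j,
      Qt i j = (∑ s' ∈ A i, α i s' * Q s' s) / α j s)
    (hirr : ∀ s s' : S, ∃ t : ℝ, 0 < t ∧ 0 < NormedSpace.exp (t • Q) s s')
    (μ : S → ℝ) (hμ0 : ∀ s : S, 0 ≤ μ s) (hμ1 : ∑ s : S, μ s = 1)
    (hμstat : Matrix.vecMul μ Q = 0)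
    (π : S → ℝ) (hπ1 : ∑ s : S, π s = 1) :
    Matrix.vecMul (fun i => ∑ s ∈ A i, μ s) Qt = 0 ∧
      (∀ i : Fin m,
        Filter.Tendsto (fun t : ℝ =>
          Matrix.vecMul (fun i' => ∑ s ∈ A i', π s) (NormedSpace.exp (t • Qt)) i
            - ∑ s ∈ A i, Matrix.vecMul π (NormedSpace.exp (t • Q)) s)
          Filter.atTop (nhds 0)) ∧
      (∀ i : Fin m, ∀ s ∈ A i,
        Filter.Tendsto (fun t : ℝ =>
          Matrix.vecMul π (NormedSpace.exp (t • Q)) s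
            / Matrix.vecMul (fun i' => ∑ s' ∈ A i', π s') (NormedSpace.exp (t • Qt)) i)
          Filter.atTop (nhds (α i s))) := by
  set U := blockIndicator ℝ A
  set V := of α
  have hQ : Q *ᵥ 1 = 0 := funext fun s => by simpa [mulVec, dotProduct] using hQrow s
  have hVU : V * U = 1 := of_mul_blockIndicator hpart hα0 hα1
  have hV : V *ᵥ 1 = 1 := of_mulVec_one hα0 hα1
  have hU : U *ᵥ 1 = 1 := blockIndicator_mulVec_one hpart
  have hQtV : Qt * V = V * Q :=
    mul_of_eq_of_mul hpart hα0 (fun i s hs => (hαpos i s hs).ne') hQt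
  have herg (ρ : S → ℝ) (hρ : ∑ s, ρ s = 1) :
      Tendsto (fun t : ℝ => ρ ᵥ* exp (t • Q)) atTop (𝓝 μ) :=
    tendsto_vecMul_exp_smul hQ0 hQ hirr hμstat (hρ.trans hμ1.symm)
  have hμV : μ = (μ ᵥ* U) ᵥ* V := eq_vecMul_vecMul_of_mul_eq hVU hV hU hQtV herg hμ1
  simp_rw [← vecMul_blockIndicator_apply]
  refine ⟨vecMul_vecMul_eq_zero_of_mul_eq hVU hQtV hμV hμstat, fun i => ?_,
    fun i s hs => ?_⟩
  · simp_rw [← Pi.sub_apply]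
    exact tendsto_pi_nhds.1 (tendsto_vecMul_exp_smul_sub_of_mul_eq hVU hV hU hQtV herg hπ1) i
  · have hpos : 0 < (μ ᵥ* U) i := by
      rw [vecMul_blockIndicator_apply]
      exact sum_pos (fun s _ => pos_of_vecMul_eq_zero hQ0 hirr hμ0
        (by rintro rfl; simp at hμ1) hμstat s) ⟨s, hs⟩
    have hlim : μ s / (μ ᵥ* U) i = α i s := by
      rw [congrFun hμV s, vecMul_of_apply_of_mem hpart hα0 _ hs,
        mul_div_cancel_left₀ _ hpos.ne']
    rw [← hlim]
    exact (tendsto_pi_nhds.1 (herg π hπ1) s).div (tendsto_pi_nhds.1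
      (tendsto_vecMul_exp_smul_of_mul_eq hVU hV hQtV herg
        (by rw [sum_vecMul_of_mulVec_one hU, hπ1])) i) hpos.ne'

theorem stmt_17 {S : Type*} [Fintype S] [DecidableEq S] [Nonempty S]
    {m : ℕ} (A : Fin m → Finset S)
    (hpart : ∀ s : S, ∃! i : Fin m, s ∈ A i)
    (hne : ∀ i, (A i).Nonempty)
    (Q : Matrix S S ℝ)
    (hQ0 : ∀ s s' : S, s ≠ s' → 0 ≤ Q s s')
    (hQrow : ∀ s : S, ∑ s' : S, Q s s' = 0)
    (α : Fin m → S → ℝ)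
    (hα0 : ∀ i, ∀ s : S, s ∉ A i → α i s = 0)
    (hαpos : ∀ i, ∀ s ∈ A i, 0 < α i s)
    (hα1 : ∀ i, ∑ s ∈ A i, α i s = 1)
    (Qt : Matrix (Fin m) (Fin m) ℝ)
    (hQt : ∀ i j : Fin m, ∀ s ∈ A j,
      Qt i j = (∑ s' ∈ A i, α i s' * Q s' s) / α j s)
    (hirr : ∀ s s' : S, ∃ t : ℝ, 0 < t ∧ 0 < NormedSpace.exp (t • Q) s s')
    (μ : S → ℝ) (hμ0 : ∀ s : S, 0 ≤ μ s) (hμ1 : ∑ s : S, μ s = 1)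
    (hμstat : Matrix.vecMul μ Q = 0)
    (π : S → ℝ) (hπ0 : ∀ s : S, 0 ≤ π s) (hπ1 : ∑ s : S, π s = 1) :
    Matrix.vecMul (fun i => ∑ s ∈ A i, μ s) Qt = 0 ∧
      (∀ i : Fin m,
        Filter.Tendsto (fun t : ℝ =>
          Matrix.vecMul (fun i' => ∑ s ∈ A i', π s) (NormedSpace.exp (t • Qt)) i
            - ∑ s ∈ A i, Matrix.vecMul π (NormedSpace.exp (t • Q)) s)
          Filter.atTop (nhds 0)) ∧
      (∀ i : Fin m, ∀ s ∈ A i,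
        Filter.Tendsto (fun t : ℝ =>
          Matrix.vecMul π (NormedSpace.exp (t • Q)) s
            / Matrix.vecMul (fun i' => ∑ s' ∈ A i', π s') (NormedSpace.exp (t • Qt)) i)
          Filter.atTop (nhds (α i s))) :=
  stmt_17_general A hpart Q hQ0 hQrow α hα0 hαpos hα1 Qt hQt hirr μ hμ0 hμ1 hμstat π hπ1
end
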